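/- Let δ > 0, q > p - 1 > 0, and let w : (0, ∞) → (0, ∞) be C¹ and satisfy the integral identity (w'(t) + δ w(t))^{p-1} = ∫_t^∞ w(s)^q ds for all t > 0 (the integral being finite), where w'(t) + δ w(t) > 0. Suppose w'(t)/w(t) → 0 as t → ∞ and w(t) → 0 as t → ∞. Then lim_{t→∞} t · w(t)^{q+1-p} = δ^{p-1} (p-1)/(q+1-p). -/
import Mathlib


open Real Set Filter Topology MeasureTheory

lemma slope_tendsto_aux {H G : ℝ → ℝ} {c T₀ : ℝ}
    (hd : ∀ t, T₀ ≤ t → HasDerivAt H (G t) t)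
    (hc : Tendsto G atTop (𝓝 c)) :
    Tendsto (fun t => H t / t) atTop (𝓝 c) := by
  rw [Metric.tendsto_atTop] at hc ⊢
  intro ε hε
  obtain ⟨T₁, hT₁⟩ := hc (ε / 4) (by positivity)
  set T : ℝ := max T₀ (max T₁ 1) with hTdef
  have hTT₀ : T₀ ≤ T := le_max_left _ _
  have hTT₁ : T₁ ≤ T := (le_max_left _ _).trans (le_max_right _ _)
  have hT1 : (1 : ℝ) ≤ T := (le_max_right _ _).trans (le_max_right _ _)
  have hT0 : (0 : ℝ) < T := lt_of_lt_of_le one_pos hT1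
  set M : ℝ := |H T| + (|c| + ε / 4) * T with hMdef
  have hM : 0 ≤ M := by positivity
  clear_value T
  clear_value M
  refine ⟨max (T + 1) (4 * (M + 1) / ε), fun t ht => ?_⟩
  have ht1 : T + 1 ≤ t := le_trans (le_max_left _ _) ht
  have ht2 : 4 * (M + 1) / ε ≤ t := le_trans (le_max_right _ _) ht
  have hTt : T < t := by linarith
  have ht0 : (0 : ℝ) < t := by linarith
  obtain ⟨ξ, hξ, hξeq⟩ :=
    exists_hasDerivAt_eq_slope H G hTt
      (fun x hx => ((hd x (hTT₀.trans hx.1)).continuousAt).continuousWithinAt)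
      (fun x hx => hd x (hTT₀.trans hx.1.le))
  have hξT₁ : T₁ ≤ ξ := hTT₁.trans hξ.1.le
  have hdξ : |G ξ - c| < ε / 4 := by
    have := hT₁ ξ hξT₁; rwa [Real.dist_eq] at this
  have hGξ : |G ξ| ≤ |c| + ε / 4 := by
    have := abs_sub_abs_le_abs_sub (G ξ) c; linarith
  have htT : t - T ≠ 0 := by nlinarith
  have hHt : H t = H T + G ξ * (t - T) := by
    field_simp at hξeq; linarith [hξeq]
  have key : H t / t - c = (H T - G ξ * T) / t + (G ξ - c) := by
    rw [hHt]; field_simp; ring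
  have hb1 : |(H T - G ξ * T) / t| ≤ M / t := by
    rw [abs_div, abs_of_pos ht0]
    apply div_le_div_of_nonneg_right ?_ ht0.le
    calc |H T - G ξ * T| ≤ |H T| + |G ξ * T| := abs_sub _ _
      _ = |H T| + |G ξ| * T := by rw [abs_mul, abs_of_pos hT0]
      _ ≤ M := by rw [hMdef]; nlinarith
  have hb2 : M / t < ε / 4 := by
    rw [div_lt_iff₀ ht0]
    rw [div_le_iff₀ hε] at ht2
    nlinarith [mul_pos hε ht0]
  rw [Real.dist_eq, key]
  calc |(H T - G ξ * T) / t + (G ξ - c)| ≤ |(H T - G ξ * T) / t| + |G ξ - c| := abs_add_le _ _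
    _ < ε / 4 + ε / 4 := add_lt_add (lt_of_le_of_lt hb1 hb2) hdξ
    _ < ε := by linarith

/-- Critical-case asymptotics: if `(w' + δw)^{p-1} = ∫_t^∞ w^q`,
`w'/w → 0` and `w → 0` at `∞`, then `t · w(t)^{q+1-p} → δ^{p-1}(p-1)/(q+1-p)`. -/
theorem critical_asymptotics (p q δ : ℝ) (hp : 1 < p) (hq : p - 1 < q) (hδ : 0 < δ)
    (w w' : ℝ → ℝ)
    (hpos : ∀ t > (0:ℝ), 0 < w t)
    (hd : ∀ t > (0:ℝ), HasDerivAt w (w' t) t)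
    (hpos' : ∀ t > (0:ℝ), 0 < w' t + δ * w t)
    (hint : ∀ t > (0:ℝ), MeasureTheory.IntegrableOn (fun s => w s ^ q) (Set.Ioi t))
    (heq : ∀ t > (0:ℝ), (w' t + δ * w t) ^ (p - 1) = ∫ s in Set.Ioi t, w s ^ q)
    (hratio : Tendsto (fun t => w' t / w t) atTop (nhds 0))
    (hw0 : Tendsto w atTop (nhds 0)) :
    Tendsto (fun t => t * w t ^ (q + 1 - p)) atTop
      (nhds (δ ^ (p - 1) * (p - 1) / (q + 1 - p))) := by
  have hp1 : (0:ℝ) < p - 1 := by linarith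
  have hqp : (0:ℝ) < q + 1 - p := by linarith
  have hq0 : (0:ℝ) < q := by linarith
  set F : ℝ → ℝ := fun t => ∫ s in Set.Ioi t, w s ^ q with hFdef
  have hFeq : ∀ t > (0:ℝ), F t = (w' t + δ * w t) ^ (p - 1) := fun t ht => (heq t ht).symm
  have hFpos : ∀ t > (0:ℝ), 0 < F t := fun t ht =>
    (hFeq t ht) ▸ rpow_pos_of_pos (hpos' t ht) _
  have hgc : ContinuousOn (fun s => w s ^ q) (Ioi 0) := fun t ht =>
    (ContinuousAt.rpow_const ((hd t ht).continuousAt) (Or.inr hq0.le)).continuousWithinAt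
  -- derivative of F
  have hFd : ∀ t > (0:ℝ), HasDerivAt F (-(w t ^ q)) t := by
    intro t ht
    have h2 : (0:ℝ) < t / 2 := by linarith
    have hev : (fun u => F (t/2) - ∫ s in (t/2)..u, w s ^ q) =ᶠ[𝓝 t] F := by
      filter_upwards [eventually_gt_nhds (show t/2 < t by linarith)] with u hu
      have hsplit : (∫ s in Ioc (t/2) u ∪ Ioi u, w s ^ q)
          = (∫ s in Ioc (t/2) u, w s ^ q) + ∫ s in Ioi u, w s ^ q := by
        refine setIntegral_union (Ioc_disjoint_Ioi le_rfl) measurableSet_Ioi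
          ((hint _ h2).mono_set Ioc_subset_Ioi_self) (hint u (h2.trans hu))
      have hU : Ioc (t/2) u ∪ Ioi u = Ioi (t/2) := by
        rw [Ioc_union_Ioi (le_max_right _ _), min_eq_left hu.le]
      rw [hU] at hsplit
      have : F u = F (t/2) - ∫ s in Ioc (t/2) u, w s ^ q := by
        simp only [hFdef]; rw [hsplit]; ring
      rw [this, intervalIntegral.integral_of_le hu.le]
    have hmi : IntervalIntegrable (fun s => w s ^ q) volume (t/2) t :=
      (intervalIntegrable_iff_integrableOn_Ioc_of_le (by linarith)).mpr
        ((hint _ h2).mono_set Ioc_subset_Ioi_self)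
    have hmeas : StronglyMeasurableAtFilter (fun s => w s ^ q) (𝓝 t) volume :=
      ContinuousOn.stronglyMeasurableAtFilter isOpen_Ioi hgc t ht
    have hd2 : HasDerivAt (fun u => F (t/2) - ∫ s in (t/2)..u, w s ^ q) (-(w t ^ q)) t := by
      simpa using (intervalIntegral.integral_hasDerivAt_right hmi hmeas
        ((hgc t ht).continuousAt (Ioi_mem_nhds ht))).const_sub (F (t/2))
    exact hd2.congr_of_eventuallyEq hev.symm
  set β : ℝ := (p - 1 - q) / (p - 1) with hβdef
  have hβneg : β < 0 := div_neg_of_neg_of_pos (by linarith) hp1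
  have hβmul : (p - 1) * β = p - 1 - q := by rw [hβdef]; field_simp
  set H : ℝ → ℝ := fun t => F t ^ β with hHdef
  set G : ℝ → ℝ := fun t => -β * (δ + w' t / w t) ^ (-q) with hGdef
  have h1 : Tendsto (fun t => δ + w' t / w t) atTop (𝓝 δ) := by
    simpa using tendsto_const_nhds.add hratio
  have hev1 : ∀ᶠ t in atTop, 0 < δ + w' t / w t := by
    filter_upwards [hratio.eventually
      (eventually_gt_nhds (show -δ < (0:ℝ) by linarith))] with t ht
    linarith
  have hevd : ∀ᶠ t in atTop, HasDerivAt H (G t) t := by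
    filter_upwards [hev1, eventually_gt_atTop (0:ℝ)] with t hr ht
    have hw := hpos t ht
    have hX : 0 < w t * (δ + w' t / w t) := mul_pos hw hr
    have hfact : w' t + δ * w t = w t * (δ + w' t / w t) := by
      field_simp; ring
    have hFt : F t = (w t * (δ + w' t / w t)) ^ (p - 1) := by rw [hFeq t ht, hfact]
    have hder : HasDerivAt H (-(w t ^ q) * β * F t ^ (β - 1)) t :=
      (hFd t ht).rpow_const (Or.inl (hFpos t ht).ne')
    convert hder using 1
    have hpow : F t ^ (β - 1) = (w t * (δ + w' t / w t)) ^ (-q) := by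
      rw [hFt, ← Real.rpow_mul hX.le]
      congr 1
      rw [mul_sub, mul_one, hβmul]; ring
    rw [hpow, Real.mul_rpow hw.le hr.le, Real.rpow_neg hw.le, hGdef]
    have hwq : w t ^ q ≠ 0 := (rpow_pos_of_pos hw q).ne'
    field_simp
  have hGlim : Tendsto G atTop (𝓝 (-β * δ ^ (-q))) :=
    (h1.rpow_const (Or.inl hδ.ne')).const_mul _
  have hc : (0:ℝ) < -β * δ ^ (-q) := mul_pos (by linarith) (rpow_pos_of_pos hδ _)
  obtain ⟨T₀, hT₀⟩ := eventually_atTop.mp hevd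
  have hslope : Tendsto (fun t => H t / t) atTop (𝓝 (-β * δ ^ (-q))) :=
    slope_tendsto_aux hT₀ hGlim
  have hfinal : (fun t => (H t / t)⁻¹ * (δ + w' t / w t) ^ (p - 1 - q))
      =ᶠ[atTop] fun t => t * w t ^ (q + 1 - p) := by
    filter_upwards [hev1, eventually_gt_atTop (0:ℝ)] with t hr ht
    have hw := hpos t ht
    have hX : 0 < w t * (δ + w' t / w t) := mul_pos hw hr
    have hfact : w' t + δ * w t = w t * (δ + w' t / w t) := by
      field_simp; ring
    have hHt : H t = w t ^ (p - 1 - q) * (δ + w' t / w t) ^ (p - 1 - q) := by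
      show F t ^ β = _
      rw [hFeq t ht, hfact, ← Real.rpow_mul hX.le, hβmul, Real.mul_rpow hw.le hr.le]
    have e1 : w t ^ (q + 1 - p) = (w t ^ (p - 1 - q))⁻¹ := by
      rw [show q + 1 - p = -(p - 1 - q) by ring, Real.rpow_neg hw.le]
    have h2 : w t ^ (p - 1 - q) ≠ 0 := (rpow_pos_of_pos hw _).ne'
    have h3 : (δ + w' t / w t) ^ (p - 1 - q) ≠ 0 := (rpow_pos_of_pos hr _).ne'
    rw [inv_div, hHt, e1]
    calc t / (w t ^ (p - 1 - q) * (δ + w' t / w t) ^ (p - 1 - q)) * (δ + w' t / w t) ^ (p - 1 - q)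
        = t * (w t ^ (p - 1 - q))⁻¹ * (((δ + w' t / w t) ^ (p - 1 - q))⁻¹
            * (δ + w' t / w t) ^ (p - 1 - q)) := by
          rw [div_eq_mul_inv, mul_inv]; ring
      _ = t * (w t ^ (p - 1 - q))⁻¹ := by rw [inv_mul_cancel₀ h3, mul_one]
  have hmain : Tendsto (fun t => (H t / t)⁻¹ * (δ + w' t / w t) ^ (p - 1 - q)) atTop
      (𝓝 ((-β * δ ^ (-q))⁻¹ * δ ^ (p - 1 - q))) :=
    (hslope.inv₀ hc.ne').mul (h1.rpow_const (Or.inl hδ.ne'))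
  have hconst : (-β * δ ^ (-q))⁻¹ * δ ^ (p - 1 - q) = δ ^ (p - 1) * (p - 1) / (q + 1 - p) := by
    have hδq : (0:ℝ) < δ ^ q := rpow_pos_of_pos hδ q
    have hδ2 : (0:ℝ) < δ ^ (p - 1 - q) := rpow_pos_of_pos hδ _
    have hsplit : δ ^ (p - 1) = δ ^ q * δ ^ (p - 1 - q) := by
      rw [← Real.rpow_add hδ]; ring_nf
    have hmb : -β = (q + 1 - p) / (p - 1) := by rw [hβdef]; ring
    have key : (-β * δ ^ (-q))⁻¹ = (p - 1) / (q + 1 - p) * δ ^ q := by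
      rw [Real.rpow_neg hδ.le, mul_inv, inv_inv, hmb, inv_div]
    rw [key, hsplit]
    ring
  rw [← hconst]
  exact hmain.congr' hfinal
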